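/- arXiv:2304.13322 — 6 statements merged into one kernel-verified Lean document; each statement's English description precedes it below -/
import Mathlib

section
/- Let λ be smooth with |λ^{(n)}(t)| ≤ D^{n+1}·n! for all n ∈ ℕ and t ≥ 0, and define F(t) = (λ(t)/ε)·exp(∫₀ᵗ λ(ξ)dξ). Then for every n ∈ ℕ and t ≥ 0, |F^{(n)}(t)| ≤ ((n+1)!·D^{n+1}/ε)·exp(∫₀ᵗ λ(ξ)dξ). -/
open intervalIntegral MeasureTheory ContDiff

/-- Bound on the derivatives of `F(t) = (λ(t)/ε) exp(∫₀ᵗ λ)` under the Gevrey-1 bound. -/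
theorem F_deriv_bound (lam F : ℝ → ℝ) (D ε : ℝ) (hD : 0 < D) (hε : 0 < ε)
    (hsmooth : ContDiff ℝ (⊤ : ℕ∞) lam)
    (hG : ∀ n : ℕ, ∀ t : ℝ, 0 ≤ t →
      |iteratedDeriv n lam t| ≤ D ^ (n + 1) * n.factorial)
    (hF : ∀ t : ℝ, F t = lam t / ε * Real.exp (∫ ξ in (0:ℝ)..t, lam ξ)) :
    ∀ n : ℕ, ∀ t : ℝ, 0 ≤ t →
      |iteratedDeriv n F t| ≤
        ((n + 1).factorial : ℝ) * D ^ (n + 1) / ε * Real.exp (∫ ξ in (0:ℝ)..t, lam ξ) := by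
  have hlam : ContDiff ℝ (⊤ : ℕ∞) lam := hsmooth.of_le (by simp)
  have hlc : Continuous lam := hlam.continuous
  set E : ℝ → ℝ := fun t => Real.exp (∫ ξ in (0:ℝ)..t, lam ξ) with hEdef
  have hEpos : ∀ t, 0 < E t := fun t => Real.exp_pos _
  have hId : ∀ t : ℝ, HasDerivAt (fun u => ∫ ξ in (0:ℝ)..u, lam ξ) (lam t) t :=
    fun t => (hlc.integral_hasStrictDerivAt 0 t).hasDerivAt
  have hI : ContDiff ℝ (⊤ : ℕ∞) (fun u => ∫ ξ in (0:ℝ)..u, lam ξ) := by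
    rw [show ((⊤:ℕ∞) : WithTop ℕ∞) = ∞ by rfl, contDiff_infty_iff_deriv]
    constructor
    · exact fun t => (hId t).differentiableAt
    · have : deriv (fun u => ∫ ξ in (0:ℝ)..u, lam ξ) = lam := funext fun t => (hId t).deriv
      rw [this]; exact hlam
  have hE : ContDiff ℝ (⊤ : ℕ∞) E := (Real.contDiff_exp.of_le le_top).comp hI
  have hEd : ∀ t : ℝ, HasDerivAt E (lam t * E t) t := by
    intro t
    have := (hId t).exp
    simpa [hEdef, mul_comm] using this
  have hderivE : deriv E = fun t => lam t * E t := funext fun t => (hEd t).deriv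
  -- key bound on derivatives of E
  have key : ∀ m : ℕ, ∀ t : ℝ, 0 ≤ t →
      ‖iteratedFDeriv ℝ m E t‖ ≤ (m.factorial : ℝ) * D ^ m * E t := by
    intro m
    induction m using Nat.strong_induction_on with
    | _ m ih =>
      match m with
      | 0 =>
        intro t ht
        simp [norm_iteratedFDeriv_zero, Real.norm_eq_abs, abs_of_pos (hEpos t)]
      | (m+1) =>
        intro t ht
        have hre : iteratedDeriv (m+1) E = iteratedDeriv m (fun t => lam t * E t) := by
          rw [iteratedDeriv_succ', hderivE]
        have h1 : ‖iteratedFDeriv ℝ (m+1) E t‖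
            = ‖iteratedFDeriv ℝ m (fun t => lam t * E t) t‖ := by
          rw [norm_iteratedFDeriv_eq_norm_iteratedDeriv, hre,
            ← norm_iteratedFDeriv_eq_norm_iteratedDeriv]
        rw [h1]
        have h2 := norm_iteratedFDeriv_mul_le (𝕜 := ℝ) (N := (⊤:ℕ∞)) hlam hE t (show ((m:ℕ∞):WithTop ℕ∞) ≤ ∞ from WithTop.coe_le_coe.mpr le_top)
        refine h2.trans ?_
        have h3 : ∀ i ∈ Finset.range (m+1),
            (m.choose i : ℝ) * ‖iteratedFDeriv ℝ i lam t‖ * ‖iteratedFDeriv ℝ (m-i) E t‖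
              ≤ (m.factorial : ℝ) * D ^ (m+1) * E t := by
          intro i hi
          rw [Finset.mem_range, Nat.lt_succ_iff] at hi
          have hl : ‖iteratedFDeriv ℝ i lam t‖ ≤ D ^ (i+1) * (i.factorial : ℝ) := by
            rw [norm_iteratedFDeriv_eq_norm_iteratedDeriv, Real.norm_eq_abs]
            exact hG i t ht
          have hEb : ‖iteratedFDeriv ℝ (m-i) E t‖ ≤ ((m-i).factorial : ℝ) * D ^ (m-i) * E t :=
            ih (m-i) (Nat.lt_succ_of_le (Nat.sub_le m i)) t ht
          calc (m.choose i : ℝ) * ‖iteratedFDeriv ℝ i lam t‖ * ‖iteratedFDeriv ℝ (m-i) E t‖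
              ≤ (m.choose i : ℝ) * (D ^ (i+1) * (i.factorial : ℝ))
                * (((m-i).factorial : ℝ) * D ^ (m-i) * E t) := by
                apply mul_le_mul (mul_le_mul_of_nonneg_left hl (by positivity)) hEb
                  (norm_nonneg _) (by positivity)
            _ = ((m.choose i : ℝ) * i.factorial * (m-i).factorial) * (D ^ ((i+1)+(m-i)) * E t) := by
                rw [pow_add]; ring
            _ = (m.factorial : ℝ) * D ^ (m+1) * E t := by
                have hc : m.choose i * i.factorial * (m-i).factorial = m.factorial :=
                  Nat.choose_mul_factorial_mul_factorial hi
                have hp : (i+1)+(m-i) = m+1 := by omega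
                rw [hp, ← hc]; push_cast; ring
        refine (Finset.sum_le_sum h3).trans ?_
        rw [Finset.sum_const, Finset.card_range, nsmul_eq_mul]
        have : ((m+1).factorial : ℝ) = (m+1) * m.factorial := by
          rw [Nat.factorial_succ]; push_cast; ring
        rw [this]; apply le_of_eq; push_cast; ring
  -- now the main statement
  intro n t ht
  have hFfun : F = fun t => (ε⁻¹ • lam) t * E t := by
    funext s
    simp [hF s, hEdef, div_eq_inv_mul, Pi.smul_apply, smul_eq_mul]
  have hsm : ContDiff ℝ (⊤:ℕ∞) (ε⁻¹ • lam) := hlam.const_smul ε⁻¹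
  have h0 : |iteratedDeriv n F t| = ‖iteratedFDeriv ℝ n (fun t => (ε⁻¹ • lam) t * E t) t‖ := by
    rw [← Real.norm_eq_abs, ← norm_iteratedFDeriv_eq_norm_iteratedDeriv, hFfun]
  rw [h0]
  have h2 := norm_iteratedFDeriv_mul_le (𝕜 := ℝ) (N := (⊤:ℕ∞)) hsm hE t (show ((n:ℕ∞):WithTop ℕ∞) ≤ ∞ from WithTop.coe_le_coe.mpr le_top)
  refine h2.trans ?_
  have h3 : ∀ i ∈ Finset.range (n+1),
      (n.choose i : ℝ) * ‖iteratedFDeriv ℝ i (ε⁻¹ • lam) t‖ * ‖iteratedFDeriv ℝ (n-i) E t‖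
        ≤ (n.factorial : ℝ) * D ^ (n+1) / ε * E t := by
    intro i hi
    rw [Finset.mem_range, Nat.lt_succ_iff] at hi
    have hl : ‖iteratedFDeriv ℝ i (ε⁻¹ • lam) t‖ ≤ ε⁻¹ * (D ^ (i+1) * (i.factorial : ℝ)) := by
      rw [iteratedFDeriv_const_smul_apply (hsmooth.contDiffAt.of_le (by exact_mod_cast le_top))]
      rw [norm_smul ε⁻¹ (iteratedFDeriv ℝ i lam t)]
      rw [norm_iteratedFDeriv_eq_norm_iteratedDeriv, Real.norm_eq_abs, Real.norm_eq_abs,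
        abs_of_pos (inv_pos.mpr hε)]
      exact mul_le_mul_of_nonneg_left (hG i t ht) (by positivity)
    have hEb := key (n-i) t ht
    calc (n.choose i : ℝ) * ‖iteratedFDeriv ℝ i (ε⁻¹ • lam) t‖ * ‖iteratedFDeriv ℝ (n-i) E t‖
        ≤ (n.choose i : ℝ) * (ε⁻¹ * (D ^ (i+1) * (i.factorial : ℝ)))
          * (((n-i).factorial : ℝ) * D ^ (n-i) * E t) := by
          apply mul_le_mul (mul_le_mul_of_nonneg_left hl (by positivity)) hEb
            (norm_nonneg _) (by positivity)
      _ = ((n.choose i : ℝ) * i.factorial * (n-i).factorial) * (ε⁻¹ * D ^ ((i+1)+(n-i)) * E t) := by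
          rw [pow_add]; ring
      _ = (n.factorial : ℝ) * D ^ (n+1) / ε * E t := by
          have hc : n.choose i * i.factorial * (n-i).factorial = n.factorial :=
            Nat.choose_mul_factorial_mul_factorial hi
          have hp : (i+1)+(n-i) = n+1 := by omega
          rw [hp, ← hc]; push_cast; field_simp
  refine (Finset.sum_le_sum h3).trans ?_
  rw [Finset.sum_const, Finset.card_range, nsmul_eq_mul]
  have : ((n+1).factorial : ℝ) = (n+1) * n.factorial := by
    rw [Nat.factorial_succ]; push_cast; ring
  rw [this]; apply le_of_eq; push_cast; ring
end

section
/- Under the Gevrey bound on λ, the series K(x,y,t) = −(x/2)·exp(−∫₀ᵗ λ)·Σ_{n=0}^∞ [1/(n!(n+1)!)]·((x²−y²)/(4ε))ⁿ·F^{(n)}(t) converges absolutely for all 0 ≤ y ≤ x ≤ 1 and t ≥ 0, and satisfies |K(x,y,t)| ≤ (D/(2ε))·e^{D/(4ε)}. -/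
set_option maxHeartbeats 1000000


/-- The kernel series converges absolutely and `|K(x,y,t)| ≤ (D/(2ε)) e^{D/(4ε)}`. -/
theorem kernel_series_bound (lam F : ℝ → ℝ) (D ε : ℝ) (hD : 0 < D) (hε : 0 < ε)
    (K : ℝ → ℝ → ℝ → ℝ)
    (hsmooth : ContDiff ℝ (⊤ : ℕ∞) lam)
    (hG : ∀ n : ℕ, ∀ t : ℝ, 0 ≤ t →
      |iteratedDeriv n lam t| ≤ D ^ (n + 1) * n.factorial)
    (hF : ∀ t : ℝ, F t = lam t / ε * Real.exp (∫ ξ in (0:ℝ)..t, lam ξ))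
    (hFbound : ∀ n : ℕ, ∀ t : ℝ, 0 ≤ t →
      |iteratedDeriv n F t| ≤
        ((n + 1).factorial : ℝ) * D ^ (n + 1) / ε * Real.exp (∫ ξ in (0:ℝ)..t, lam ξ))
    (hK : ∀ x y t : ℝ, K x y t =
      -(x / 2) * Real.exp (-∫ ξ in (0:ℝ)..t, lam ξ) *
        ∑' n : ℕ, (1 / ((n.factorial : ℝ) * ((n + 1).factorial : ℝ))) *
          ((x ^ 2 - y ^ 2) / (4 * ε)) ^ n * iteratedDeriv n F t) :
    ∀ x y t : ℝ, 0 ≤ y → y ≤ x → x ≤ 1 → 0 ≤ t →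
      Summable (fun n : ℕ =>
        |(1 / ((n.factorial : ℝ) * ((n + 1).factorial : ℝ))) *
          ((x ^ 2 - y ^ 2) / (4 * ε)) ^ n * iteratedDeriv n F t|) ∧
      |K x y t| ≤ D / (2 * ε) * Real.exp (D / (4 * ε)) := by
  intro x y t hy hyx hx ht
  have hx0 : 0 ≤ x := le_trans hy hyx
  set E := Real.exp (∫ ξ in (0:ℝ)..t, lam ξ) with hEdef
  have hE : (0:ℝ) < E := Real.exp_pos _
  set r := (x ^ 2 - y ^ 2) / (4 * ε) with hrdef
  have hr0 : 0 ≤ r := by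
    have : y ^ 2 ≤ x ^ 2 := pow_le_pow_left₀ hy hyx 2
    have h4 : (0:ℝ) < 4 * ε := by linarith
    exact div_nonneg (by linarith) h4.le
  have hr1 : r ≤ 1 / (4 * ε) := by
    have hx2 : x ^ 2 ≤ 1 := by nlinarith
    have hy2 : 0 ≤ y ^ 2 := sq_nonneg y
    have h4 : (0:ℝ) < 4 * ε := by linarith
    rw [hrdef, div_le_div_iff₀ (by linarith) (by linarith)]
    nlinarith
  -- bound on each term
  have hterm : ∀ n : ℕ,
      |(1 / ((n.factorial : ℝ) * ((n + 1).factorial : ℝ))) * r ^ n * iteratedDeriv n F t|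
        ≤ D / ε * E * ((D / (4 * ε)) ^ n / n.factorial) := by
    intro n
    have hfac : (0:ℝ) < (n.factorial : ℝ) := by exact_mod_cast n.factorial_pos
    have hfac1 : (0:ℝ) < ((n + 1).factorial : ℝ) := by exact_mod_cast (n + 1).factorial_pos
    have hc : (0:ℝ) ≤ 1 / ((n.factorial : ℝ) * ((n + 1).factorial : ℝ)) := by positivity
    rw [abs_mul, abs_mul, abs_of_nonneg hc, abs_of_nonneg (pow_nonneg hr0 n)]
    have h1 : |iteratedDeriv n F t| ≤ ((n + 1).factorial : ℝ) * D ^ (n + 1) / ε * E :=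
      hFbound n t ht
    have h2 : r ^ n ≤ (1 / (4 * ε)) ^ n := pow_le_pow_left₀ hr0 hr1 n
    calc (1 / ((n.factorial : ℝ) * ((n + 1).factorial : ℝ))) * r ^ n * |iteratedDeriv n F t|
        ≤ (1 / ((n.factorial : ℝ) * ((n + 1).factorial : ℝ))) * (1 / (4 * ε)) ^ n *
            (((n + 1).factorial : ℝ) * D ^ (n + 1) / ε * E) := by
          apply mul_le_mul
          · exact mul_le_mul_of_nonneg_left h2 hc
          · exact h1
          · exact abs_nonneg _
          · positivity
      _ = D / ε * E * ((D / (4 * ε)) ^ n / n.factorial) := by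
          rw [div_pow, div_pow, pow_succ]
          field_simp
          ring
  have hsum : Summable (fun n : ℕ => D / ε * E * ((D / (4 * ε)) ^ n / n.factorial)) :=
    (Real.summable_pow_div_factorial (D / (4 * ε))).mul_left _
  have habs : Summable (fun n : ℕ =>
      |(1 / ((n.factorial : ℝ) * ((n + 1).factorial : ℝ))) * r ^ n * iteratedDeriv n F t|) :=
    Summable.of_nonneg_of_le (fun n => abs_nonneg _) hterm hsum
  refine ⟨habs, ?_⟩
  have htsum_exp : ∑' n : ℕ, (D / (4 * ε)) ^ n / (n.factorial : ℝ)
      = Real.exp (D / (4 * ε)) := by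
    rw [Real.exp_eq_exp_ℝ, NormedSpace.exp_eq_tsum_div]
  have hb : |∑' n : ℕ, (1 / ((n.factorial : ℝ) * ((n + 1).factorial : ℝ))) * r ^ n *
      iteratedDeriv n F t| ≤ D / ε * E * Real.exp (D / (4 * ε)) := by
    calc |∑' n : ℕ, (1 / ((n.factorial : ℝ) * ((n + 1).factorial : ℝ))) * r ^ n *
        iteratedDeriv n F t|
        ≤ ∑' n : ℕ, |(1 / ((n.factorial : ℝ) * ((n + 1).factorial : ℝ))) * r ^ n *
            iteratedDeriv n F t| := by
          have hnorm : Summable (fun n : ℕ =>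
              ‖(1 / ((n.factorial : ℝ) * ((n + 1).factorial : ℝ))) * r ^ n *
                iteratedDeriv n F t‖) := by
            simpa only [Real.norm_eq_abs] using habs
          have h := norm_tsum_le_tsum_norm hnorm
          simpa only [Real.norm_eq_abs] using h
      _ ≤ ∑' n : ℕ, D / ε * E * ((D / (4 * ε)) ^ n / n.factorial) :=
          Summable.tsum_le_tsum hterm habs hsum
      _ = D / ε * E * ∑' n : ℕ, (D / (4 * ε)) ^ n / (n.factorial : ℝ) := by
          rw [tsum_mul_left]
      _ = D / ε * E * Real.exp (D / (4 * ε)) := by rw [htsum_exp]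
  rw [hK]
  rw [abs_mul, abs_mul]
  have hexp_neg : Real.exp (-∫ ξ in (0:ℝ)..t, lam ξ) = E⁻¹ := by
    rw [Real.exp_neg]
  rw [hexp_neg, abs_neg, abs_of_nonneg (by linarith : (0:ℝ) ≤ x / 2),
    abs_of_nonneg (inv_nonneg.mpr hE.le)]
  calc x / 2 * E⁻¹ * |∑' n : ℕ, (1 / ((n.factorial : ℝ) * ((n + 1).factorial : ℝ))) * r ^ n *
      iteratedDeriv n F t|
      ≤ x / 2 * E⁻¹ * (D / ε * E * Real.exp (D / (4 * ε))) := by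
        apply mul_le_mul_of_nonneg_left hb (by positivity)
    _ = x / 2 * (D / ε * Real.exp (D / (4 * ε))) := by
        field_simp
    _ ≤ 1 / 2 * (D / ε * Real.exp (D / (4 * ε))) := by
        apply mul_le_mul_of_nonneg_right (by linarith) (by positivity)
    _ = D / (2 * ε) * Real.exp (D / (4 * ε)) := by ring
end

section
/- Under the Gevrey bound on λ, the partial t-derivative of the kernel K given by the explicit series satisfies |K_t(x,y,t)| ≤ (D²/(2ε))·(3 + D/(4ε))·e^{D/(4ε)} for all 0 ≤ y ≤ x ≤ 1 and t ≥ 0. -/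
open scoped ContDiff

lemma kb_mul_bound {f g : ℝ → ℝ} (hf : ContDiff ℝ ∞ f) (hg : ContDiff ℝ ∞ g)
    {D M : ℝ} (hD : 0 ≤ D) (hM : 0 ≤ M) {t : ℝ} (n : ℕ)
    (hfb : ∀ i, i ≤ n → |iteratedDeriv i f t| ≤ D ^ (i + 1) * i.factorial)
    (hgb : ∀ j, j ≤ n → |iteratedDeriv j g t| ≤ j.factorial * D ^ j * M) :
    |iteratedDeriv n (fun s => f s * g s) t| ≤ (n + 1).factorial * D ^ (n + 1) * M := by
  have key := norm_iteratedFDeriv_mul_le (𝕜 := ℝ) (N := ∞) hf hg t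
    (n := n) (by exact_mod_cast le_top)
  simp only [norm_iteratedFDeriv_eq_norm_iteratedDeriv, Real.norm_eq_abs] at key
  refine key.trans ?_
  have : ∀ i ∈ Finset.range (n + 1),
      (n.choose i : ℝ) * |iteratedDeriv i f t| * |iteratedDeriv (n - i) g t| ≤
        (n.factorial : ℝ) * D ^ (n + 1) * M := by
    intro i hi
    rw [Finset.mem_range, Nat.lt_succ_iff] at hi
    have h1 := hfb i hi
    have h2 := hgb (n - i) (Nat.sub_le n i)
    have hD1 : (0:ℝ) ≤ D ^ (i+1) * i.factorial := by positivity
    calc (n.choose i : ℝ) * |iteratedDeriv i f t| * |iteratedDeriv (n - i) g t|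
        ≤ (n.choose i : ℝ) * (D ^ (i + 1) * i.factorial) *
          ((n - i).factorial * D ^ (n - i) * M) := by
          apply mul_le_mul _ h2 (abs_nonneg _) (by positivity)
          exact mul_le_mul_of_nonneg_left h1 (by positivity)
      _ = ((n.choose i : ℝ) * i.factorial * (n - i).factorial) * (D ^ (i + 1) * D ^ (n - i)) * M := by
          ring
      _ = (n.factorial : ℝ) * D ^ (n + 1) * M := by
          rw [← pow_add]
          congr 2
          · rw [← Nat.cast_mul, ← Nat.cast_mul, Nat.choose_mul_factorial_mul_factorial hi]
          · congr 1; omega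
  calc ∑ i ∈ Finset.range (n + 1),
        (n.choose i : ℝ) * |iteratedDeriv i f t| * |iteratedDeriv (n - i) g t|
      ≤ ∑ i ∈ Finset.range (n + 1), (n.factorial : ℝ) * D ^ (n + 1) * M :=
        Finset.sum_le_sum this
    _ = (n + 1).factorial * D ^ (n + 1) * M := by
        rw [Finset.sum_const, Finset.card_range, Nat.factorial_succ]
        push_cast; ring

lemma kb_gevrey {lam Q : ℝ → ℝ} {D : ℝ} (hD : 0 ≤ D)
    (hlam : ContDiff ℝ ∞ lam) (hQ : ContDiff ℝ ∞ Q)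
    (hQ' : deriv Q = fun s => lam s * Q s) (hQpos : ∀ s, 0 ≤ Q s)
    (hG : ∀ i : ℕ, ∀ t : ℝ, 0 ≤ t → |iteratedDeriv i lam t| ≤ D ^ (i + 1) * i.factorial) :
    ∀ m : ℕ, ∀ t : ℝ, 0 ≤ t → |iteratedDeriv m Q t| ≤ m.factorial * D ^ m * Q t := by
  intro m
  induction m using Nat.strong_induction_on with
  | _ m ih =>
    match m with
    | 0 => intro t ht; simp [abs_of_nonneg (hQpos t)]
    | (k + 1) =>
      intro t ht
      have : iteratedDeriv (k + 1) Q = iteratedDeriv k (fun s => lam s * Q s) := by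
        rw [iteratedDeriv_succ', hQ']
      rw [this]
      exact kb_mul_bound hlam hQ hD (hQpos t) k (fun i hi => hG i t ht)
        (fun j hj => ih j (Nat.lt_succ_of_le hj) t ht)


lemma kb_tsum_exp {z : ℝ} (hz : 0 ≤ z) :
    ∑' n : ℕ, z ^ n / n.factorial ≤ Real.exp z :=
  Real.tsum_le_of_sum_range_le (fun n => by positivity)
    (fun n => Real.sum_le_exp_of_nonneg hz n)

lemma kb_summable_n {z : ℝ} (hz : 0 ≤ z) :
    Summable (fun n : ℕ => (n : ℝ) * z ^ n / n.factorial) := by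
  refine Summable.of_nonneg_of_le (fun n => by positivity) ?_
    (Real.summable_pow_div_factorial (2 * z))
  intro n
  rw [mul_pow]
  have hn : (n : ℝ) ≤ 2 ^ n := by exact_mod_cast (Nat.lt_two_pow_self).le
  have : (n : ℝ) * z ^ n ≤ 2 ^ n * z ^ n :=
    mul_le_mul_of_nonneg_right hn (by positivity)
  exact div_le_div_of_nonneg_right this (by positivity) |>.trans_eq rfl

lemma kb_tsum_n {z : ℝ} (hz : 0 ≤ z) :
    ∑' n : ℕ, (n : ℝ) * z ^ n / n.factorial ≤ z * Real.exp z := by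
  rw [Summable.tsum_eq_zero_add (kb_summable_n hz)]
  have heq : (fun n : ℕ => ((n + 1 : ℕ) : ℝ) * z ^ (n + 1) / (n + 1).factorial) =
      fun n : ℕ => z * (z ^ n / n.factorial) := by
    funext n
    rw [Nat.factorial_succ]
    push_cast
    have h1 : ((n : ℝ) + 1) ≠ 0 := by positivity
    have h2 : (n.factorial : ℝ) ≠ 0 := by exact_mod_cast n.factorial_ne_zero
    field_simp
    ring
  simp only [Nat.cast_zero, zero_mul, pow_zero, Nat.factorial_zero, heq, zero_add,
    Nat.cast_one, zero_div]
  rw [tsum_mul_left]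
  exact mul_le_mul_of_nonneg_left (kb_tsum_exp hz) hz

lemma kb_summable_n2 {z : ℝ} (hz : 0 ≤ z) :
    Summable (fun n : ℕ => ((n : ℝ) + 2) * z ^ n / n.factorial) := by
  have : (fun n : ℕ => ((n : ℝ) + 2) * z ^ n / n.factorial) =
      fun n : ℕ => (n : ℝ) * z ^ n / n.factorial + 2 * (z ^ n / n.factorial) := by
    funext n; ring
  rw [this]
  exact (kb_summable_n hz).add ((Real.summable_pow_div_factorial z).mul_left 2)

lemma kb_tsum_n2 {z : ℝ} (hz : 0 ≤ z) :
    ∑' n : ℕ, ((n : ℝ) + 2) * z ^ n / n.factorial ≤ (2 + z) * Real.exp z := by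
  have : (fun n : ℕ => ((n : ℝ) + 2) * z ^ n / n.factorial) =
      fun n : ℕ => (n : ℝ) * z ^ n / n.factorial + 2 * (z ^ n / n.factorial) := by
    funext n; ring
  rw [this, Summable.tsum_add (kb_summable_n hz) ((Real.summable_pow_div_factorial z).mul_left 2),
    tsum_mul_left]
  have h2 := kb_tsum_exp hz
  nlinarith [kb_tsum_n hz, Real.exp_pos z]


/-- Bound on the time derivative of the explicit kernel:
`|K_t(x,y,t)| ≤ (D²/(2ε))(3 + D/(4ε)) e^{D/(4ε)}`. -/
theorem kernel_time_deriv_bound (lam F : ℝ → ℝ) (D ε : ℝ) (hD : 0 < D) (hε : 0 < ε)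
    (K : ℝ → ℝ → ℝ → ℝ)
    (hsmooth : ContDiff ℝ (⊤ : ℕ∞) lam)
    (hG : ∀ n : ℕ, ∀ t : ℝ, 0 ≤ t →
      |iteratedDeriv n lam t| ≤ D ^ (n + 1) * n.factorial)
    (hF : ∀ t : ℝ, F t = lam t / ε * Real.exp (∫ ξ in (0:ℝ)..t, lam ξ))
    (hK : ∀ x y t : ℝ, K x y t =
      -(x / 2) * Real.exp (-∫ ξ in (0:ℝ)..t, lam ξ) *
        ∑' n : ℕ, (1 / ((n.factorial : ℝ) * ((n + 1).factorial : ℝ))) *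
          ((x ^ 2 - y ^ 2) / (4 * ε)) ^ n * iteratedDeriv n F t) :
    ∀ x y t : ℝ, 0 ≤ y → y ≤ x → x ≤ 1 → 0 ≤ t →
      |deriv (fun s => K x y s) t| ≤
        D ^ 2 / (2 * ε) * (3 + D / (4 * ε)) * Real.exp (D / (4 * ε)) := by
  intro x y t hy hyx hx1 ht
  have hx0 : 0 ≤ x := hy.trans hyx
  have hlam : ContDiff ℝ ∞ lam := hsmooth.of_le (mod_cast le_top)
  have hlc : Continuous lam := hlam.continuous
  set J : ℝ → ℝ := fun s => ∫ ξ in (0:ℝ)..s, lam ξ with hJdef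
  have hJ : ∀ s, HasDerivAt J (lam s) s := fun s =>
    intervalIntegral.integral_hasDerivAt_right (hlc.intervalIntegrable _ _)
      hlc.aestronglyMeasurable.stronglyMeasurableAtFilter hlc.continuousAt
  have hJd : Differentiable ℝ J := fun s => (hJ s).differentiableAt
  have hJderiv : deriv J = lam := funext fun s => (hJ s).deriv
  have hJsmooth : ContDiff ℝ ∞ J :=
    contDiff_infty_iff_deriv.2 ⟨hJd, hJderiv ▸ hlam⟩
  set Q : ℝ → ℝ := fun s => Real.exp (J s) / ε with hQdef
  have hQpos : ∀ s, 0 < Q s := fun s => div_pos (Real.exp_pos _) hε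
  have hQ : ∀ s, HasDerivAt Q (lam s * Q s) s := by
    intro s
    have h1 : HasDerivAt Q (Real.exp (J s) * lam s / ε) s :=
      ((Real.hasDerivAt_exp (J s)).comp s (hJ s)).div_const ε
    convert h1 using 1
    simp only [hQdef]
    ring
  have hQderiv : deriv Q = fun s => lam s * Q s := funext fun s => (hQ s).deriv
  have hQsmooth : ContDiff ℝ ∞ Q :=
    ((Real.contDiff_exp.of_le (mod_cast le_top)).comp hJsmooth).div_const ε
  have hQb := kb_gevrey hD.le hlam hQsmooth hQderiv (fun s => (hQpos s).le) hG
  have hFeq : F = fun s => lam s * Q s := funext fun s => by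
    rw [hF s]; simp only [hQdef, hJdef]; ring
  have hFsmooth : ContDiff ℝ ∞ F := hFeq ▸ hlam.mul hQsmooth
  have hFb : ∀ n : ℕ, ∀ s : ℝ, 0 ≤ s →
      |iteratedDeriv n F s| ≤ (n + 1).factorial * D ^ (n + 1) * Q s := by
    intro n s hs
    rw [hFeq]
    exact kb_mul_bound hlam hQsmooth hD.le (hQpos s).le n (fun i _ => hG i s hs)
      (fun j _ => hQb j s hs)
  have hQle : ∀ s C : ℝ, 0 ≤ s → s ≤ C → Q s ≤ Real.exp (D * C) / ε := by
    intro s C hs hsC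
    have hlamle : ∀ ξ ∈ Set.Icc (0:ℝ) s, lam ξ ≤ D := by
      intro ξ hξ
      have h := hG 0 ξ hξ.1
      simp only [iteratedDeriv_zero, zero_add, pow_one, Nat.factorial_zero, Nat.cast_one,
        mul_one] at h
      exact (abs_le.1 h).2
    have hint : J s ≤ D * C := by
      have h1 : J s ≤ ∫ _ in (0:ℝ)..s, D :=
        intervalIntegral.integral_mono_on hs (hlc.intervalIntegrable _ _)
          intervalIntegrable_const hlamle
      have h2 : (∫ _ in (0:ℝ)..s, D) = s * D := by
        rw [intervalIntegral.integral_const, smul_eq_mul, sub_zero]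
      calc J s ≤ s * D := h2 ▸ h1
        _ ≤ C * D := mul_le_mul_of_nonneg_right hsC hD.le
        _ = D * C := mul_comm _ _
    simp only [hQdef]
    gcongr
  -- series setup
  have hKs' := fun s => hK x y s
  set a : ℝ := (x ^ 2 - y ^ 2) / (4 * ε) with ha
  have ha0 : 0 ≤ a := by
    apply div_nonneg _ (by positivity)
    nlinarith
  have haD : a ≤ 1 / (4 * ε) := by
    have hx2 : x ^ 2 ≤ 1 := by nlinarith
    rw [ha, div_le_div_iff₀ (by positivity) (by positivity)]
    nlinarith [sq_nonneg y]
  set z : ℝ := a * D with hzdef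
  have hz0 : 0 ≤ z := mul_nonneg ha0 hD.le
  have hzw : z ≤ D / (4 * ε) := by
    calc z = a * D := rfl
      _ ≤ (1 / (4 * ε)) * D := mul_le_mul_of_nonneg_right haD hD.le
      _ = D / (4 * ε) := by ring
  set f : ℕ → ℝ → ℝ := fun n s =>
    1 / ((n.factorial : ℝ) * ((n + 1).factorial : ℝ)) * a ^ n * iteratedDeriv n F s with hfdef
  set f' : ℕ → ℝ → ℝ := fun n s =>
    1 / ((n.factorial : ℝ) * ((n + 1).factorial : ℝ)) * a ^ n * iteratedDeriv (n + 1) F s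
    with hf'def
  have hKs : ∀ s : ℝ, K x y s = -(x / 2) * Real.exp (-J s) * ∑' n, f n s := by
    intro s
    rw [hKs' s]
  have hfd : ∀ n s, HasDerivAt (f n) (f' n s) s := by
    intro n s
    have hdiff : Differentiable ℝ (iteratedDeriv n F) :=
      hFsmooth.differentiable_iteratedDeriv n
        (by exact_mod_cast (Ne.lt_top (by simp) : (n : ℕ∞) < ⊤))
    have h1 : HasDerivAt (iteratedDeriv n F) (iteratedDeriv (n + 1) F s) s := by
      rw [iteratedDeriv_succ]
      exact (hdiff s).hasDerivAt
    exact h1.const_mul _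
  have hfc : ∀ n, Continuous (f n) := fun n =>
    continuous_iff_continuousAt.2 fun s => (hfd n s).continuousAt
  have cast_ne : ∀ n : ℕ, ((n.factorial : ℝ)) ≠ 0 := fun n => by
    exact_mod_cast n.factorial_ne_zero
  have hfb : ∀ n s, 0 ≤ s → |f n s| ≤ D * Q s * (z ^ n / n.factorial) := by
    intro n s hs
    have h1 : |f n s| = 1 / ((n.factorial : ℝ) * ((n + 1).factorial : ℝ)) * a ^ n *
        |iteratedDeriv n F s| := by
      simp only [hfdef]
      rw [abs_mul, abs_of_nonneg (mul_nonneg (by positivity) (pow_nonneg ha0 n))]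
    rw [h1]
    calc 1 / ((n.factorial : ℝ) * ((n + 1).factorial : ℝ)) * a ^ n * |iteratedDeriv n F s|
        ≤ 1 / ((n.factorial : ℝ) * ((n + 1).factorial : ℝ)) * a ^ n *
          ((n + 1).factorial * D ^ (n + 1) * Q s) :=
          mul_le_mul_of_nonneg_left (hFb n s hs)
            (mul_nonneg (by positivity) (pow_nonneg ha0 n))
      _ = D * Q s * (z ^ n / n.factorial) := by
          simp only [hzdef, mul_pow]
          field_simp
          ring
  have hfb' : ∀ n s, 0 ≤ s →
      |f' n s| ≤ D ^ 2 * Q s * (((n : ℝ) + 2) * z ^ n / n.factorial) := by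
    intro n s hs
    have h1 : |f' n s| = 1 / ((n.factorial : ℝ) * ((n + 1).factorial : ℝ)) * a ^ n *
        |iteratedDeriv (n + 1) F s| := by
      simp only [hf'def]
      rw [abs_mul, abs_of_nonneg (mul_nonneg (by positivity) (pow_nonneg ha0 n))]
    rw [h1]
    calc 1 / ((n.factorial : ℝ) * ((n + 1).factorial : ℝ)) * a ^ n *
          |iteratedDeriv (n + 1) F s|
        ≤ 1 / ((n.factorial : ℝ) * ((n + 1).factorial : ℝ)) * a ^ n *
          ((n + 1 + 1).factorial * D ^ (n + 1 + 1) * Q s) :=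
          mul_le_mul_of_nonneg_left (hFb (n + 1) s hs)
            (mul_nonneg (by positivity) (pow_nonneg ha0 n))
      _ = D ^ 2 * Q s * (((n : ℝ) + 2) * z ^ n / n.factorial) := by
          have h2 : ((n + 1 + 1).factorial : ℝ) = ((n : ℝ) + 2) * (n + 1).factorial := by
            rw [Nat.factorial_succ]
            push_cast
            ring
          rw [h2]
          simp only [hzdef, mul_pow]
          field_simp
          ring
  -- summability and tsum bounds
  have hsum : ∀ s : ℝ, 0 ≤ s → Summable (fun n => f n s) := by
    intro s hs
    refine Summable.of_norm_bounded
      ((Real.summable_pow_div_factorial z).mul_left (D * Q s)) ?_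
    intro n
    rw [Real.norm_eq_abs]
    exact hfb n s hs
  have hgb : ∀ s : ℝ, 0 ≤ s → |∑' n, f n s| ≤ D * Q s * Real.exp z := by
    intro s hs
    have h1 : ‖∑' n, f n s‖ ≤ D * Q s * ∑' n : ℕ, z ^ n / n.factorial := by
      rw [← tsum_mul_left]
      exact tsum_of_norm_bounded
        ((Real.summable_pow_div_factorial z).mul_left (D * Q s)).hasSum
        (fun n => by rw [Real.norm_eq_abs]; exact hfb n s hs)
    rw [Real.norm_eq_abs] at h1
    exact h1.trans (mul_le_mul_of_nonneg_left (kb_tsum_exp hz0)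
      (mul_nonneg hD.le (hQpos s).le))
  have hgb' : ∀ s : ℝ, 0 ≤ s → |∑' n, f' n s| ≤ D ^ 2 * Q s * ((2 + z) * Real.exp z) := by
    intro s hs
    have h1 : ‖∑' n, f' n s‖ ≤ D ^ 2 * Q s * ∑' n : ℕ, ((n : ℝ) + 2) * z ^ n / n.factorial := by
      rw [← tsum_mul_left]
      exact tsum_of_norm_bounded ((kb_summable_n2 hz0).mul_left (D ^ 2 * Q s)).hasSum
        (fun n => by rw [Real.norm_eq_abs]; exact hfb' n s hs)
    rw [Real.norm_eq_abs] at h1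
    exact h1.trans (mul_le_mul_of_nonneg_left (kb_tsum_n2 hz0)
      (mul_nonneg (by positivity) (hQpos s).le))
  set B : ℝ := D ^ 2 / (2 * ε) * (3 + z) * Real.exp z with hBdef
  have hB0 : 0 ≤ B := by
    apply mul_nonneg (mul_nonneg (by positivity) (by linarith)) (Real.exp_pos z).le
  have hprod : ∀ s : ℝ, Real.exp (-J s) * Q s = 1 / ε := by
    intro s
    simp only [hQdef]
    rw [← mul_div_assoc, ← Real.exp_add]
    simp
  have hlamb : ∀ s : ℝ, 0 ≤ s → |lam s| ≤ D := by
    intro s hs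
    have h := hG 0 s hs
    simpa using h
  have key : ∀ s : ℝ, 0 < s → ∃ d, HasDerivAt (fun r => K x y r) d s ∧ |d| ≤ B := by
    intro s hs
    have hmem : s ∈ Set.Ioo (0:ℝ) (s + 1) := ⟨hs, by linarith⟩
    have husum : Summable (fun n : ℕ =>
        D ^ 2 * (Real.exp (D * (s + 1)) / ε) * (((n : ℝ) + 2) * z ^ n / n.factorial)) :=
      (kb_summable_n2 hz0).mul_left _
    have hgderiv : HasDerivAt (fun r => ∑' n, f n r) (∑' n, f' n s) s := by
      refine hasDerivAt_tsum_of_isPreconnected husum isOpen_Ioo isPreconnected_Ioo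
        (fun n r _ => hfd n r) ?_ hmem (hsum s hs.le) hmem
      intro n r hr
      rw [Real.norm_eq_abs]
      refine (hfb' n r hr.1.le).trans ?_
      have hc : (0:ℝ) ≤ ((n : ℝ) + 2) * z ^ n / n.factorial :=
        div_nonneg (mul_nonneg (by positivity) (pow_nonneg hz0 n)) (by positivity)
      exact mul_le_mul_of_nonneg_right
        (mul_le_mul_of_nonneg_left (hQle r (s + 1) hr.1.le hr.2.le) (by positivity)) hc
    have h1 : HasDerivAt (fun r => -J r) (-lam s) s := (hJ s).neg
    have h2 : HasDerivAt (fun r => Real.exp (-J r)) (Real.exp (-J s) * -lam s) s :=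
      h1.exp
    have hPder : HasDerivAt (fun r => -(x / 2) * Real.exp (-J r))
        (-(x / 2) * (Real.exp (-J s) * -lam s)) s := h2.const_mul _
    have hfun : (fun r => K x y r) = fun r => -(x / 2) * Real.exp (-J r) * ∑' n, f n r :=
      funext hKs
    have hKder : HasDerivAt (fun r => K x y r)
        (-(x / 2) * (Real.exp (-J s) * -lam s) * ∑' n, f n s +
          -(x / 2) * Real.exp (-J s) * ∑' n, f' n s) s := by
      rw [hfun]
      exact hPder.mul hgderiv
    refine ⟨_, hKder, le_trans (abs_add_le _ _) ?_⟩
    have heJ : 0 < Real.exp (-J s) := Real.exp_pos _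
    have hx2 : (0:ℝ) ≤ x / 2 := by linarith
    have hx12 : x / 2 ≤ 1 / 2 := by linarith
    have hg1 := hgb s hs.le
    have hg2 := hgb' s hs.le
    have hlam1 := hlamb s hs.le
    have e1 : |(-(x / 2) * (Real.exp (-J s) * -lam s)) * ∑' n, f n s| =
        x / 2 * (Real.exp (-J s) * |lam s|) * |∑' n, f n s| := by
      simp only [abs_mul, abs_neg, abs_of_nonneg heJ.le, abs_of_nonneg hx2]
    have e2 : |(-(x / 2) * Real.exp (-J s)) * ∑' n, f' n s| =
        x / 2 * Real.exp (-J s) * |∑' n, f' n s| := by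
      simp only [abs_mul, abs_neg, abs_of_nonneg heJ.le, abs_of_nonneg hx2]
    rw [e1, e2]
    have hb1 : x / 2 * (Real.exp (-J s) * |lam s|) * |∑' n, f n s| ≤
        1 / 2 * (Real.exp (-J s) * D) * (D * Q s * Real.exp z) := by
      apply mul_le_mul ?_ hg1 (abs_nonneg _)
        (mul_nonneg (by norm_num) (mul_nonneg heJ.le hD.le))
      exact mul_le_mul hx12 (mul_le_mul_of_nonneg_left hlam1 heJ.le)
        (mul_nonneg heJ.le (abs_nonneg _)) (by norm_num)
    have hb2 : x / 2 * Real.exp (-J s) * |∑' n, f' n s| ≤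
        1 / 2 * Real.exp (-J s) * (D ^ 2 * Q s * ((2 + z) * Real.exp z)) := by
      apply mul_le_mul ?_ hg2 (abs_nonneg _) (mul_nonneg (by norm_num) heJ.le)
      exact mul_le_mul_of_nonneg_right hx12 heJ.le
    have hend : 1 / 2 * (Real.exp (-J s) * D) * (D * Q s * Real.exp z) +
        1 / 2 * Real.exp (-J s) * (D ^ 2 * Q s * ((2 + z) * Real.exp z)) =
        D ^ 2 * (3 + z) * Real.exp z * (Real.exp (-J s) * Q s) / 2 := by ring
    have hfin := add_le_add hb1 hb2
    rw [hend, hprod s] at hfin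
    refine hfin.trans (le_of_eq ?_)
    rw [hBdef]
    ring
  have hBle : B ≤ D ^ 2 / (2 * ε) * (3 + D / (4 * ε)) * Real.exp (D / (4 * ε)) := by
    rw [hBdef]
    have h1 : Real.exp z ≤ Real.exp (D / (4 * ε)) := Real.exp_le_exp.2 hzw
    have h2 : (3:ℝ) + z ≤ 3 + D / (4 * ε) := by linarith
    have h3 : (0:ℝ) ≤ D ^ 2 / (2 * ε) := by positivity
    exact mul_le_mul (mul_le_mul_of_nonneg_left h2 h3) h1 (Real.exp_pos z).le
      (mul_nonneg h3 (by positivity))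
  rcases ht.lt_or_eq with hpos | h0
  · obtain ⟨d, hd, hdb⟩ := key t hpos
    rw [hd.deriv]
    exact hdb.trans hBle
  · subst h0
    by_cases hdiff : DifferentiableAt ℝ (fun s => K x y s) 0
    · have hucont : Summable (fun n : ℕ => D * (Real.exp (D * 1) / ε) * (z ^ n / n.factorial)) :=
        (Real.summable_pow_div_factorial z).mul_left _
      have hgcont : ContinuousOn (fun r => ∑' n, f n r) (Set.Icc (0:ℝ) 1) := by
        refine (tendstoUniformlyOn_tsum hucont ?_).continuousOn ?_
        · intro n r hr
          rw [Real.norm_eq_abs]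
          refine (hfb n r hr.1).trans ?_
          have hc : (0:ℝ) ≤ z ^ n / n.factorial :=
            div_nonneg (pow_nonneg hz0 n) (by positivity)
          exact mul_le_mul_of_nonneg_right
            (mul_le_mul_of_nonneg_left (hQle r 1 hr.1 hr.2) hD.le) hc
        · refine Filter.Frequently.of_forall fun fs => ?_
          exact (continuous_finset_sum _ fun i _ => hfc i).continuousOn
      have hKcont : ContinuousWithinAt (fun s => K x y s) (Set.Ioi 0) 0 := by
        have hgc : ContinuousWithinAt (fun r => ∑' n, f n r) (Set.Ioi 0) 0 := by
          have h1 : ContinuousWithinAt (fun r => ∑' n, f n r) (Set.Icc (0:ℝ) 1) 0 :=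
            hgcont.continuousWithinAt (Set.mem_Icc.2 ⟨le_refl 0, zero_le_one⟩)
          have h2 : ContinuousWithinAt (fun r => ∑' n, f n r) (Set.Ioc (0:ℝ) 1) 0 :=
            h1.mono Set.Ioc_subset_Icc_self
          rw [ContinuousWithinAt, ← nhdsWithin_Ioc_eq_nhdsGT zero_lt_one]
          exact h2
        have hcont0 : Continuous fun r => Real.exp (-J r) :=
          Real.continuous_exp.comp (hJd.continuous.neg)
        have hcont1 : Continuous (fun r => -(x / 2) * Real.exp (-J r)) :=
          continuous_const.mul hcont0
        have hprodc := hcont1.continuousWithinAt.mul hgc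
        have hfun : (fun s => K x y s) = fun r => -(x / 2) * Real.exp (-J r) * ∑' n, f n r :=
          funext hKs
        rw [hfun]
        exact hprodc
      have hslope : ∀ h : ℝ, 0 < h → |K x y h - K x y 0| ≤ B * h := by
        intro h hh
        have hwithin : ∀ r ∈ Set.Ioi (0:ℝ),
            HasDerivWithinAt (fun s => K x y s) (deriv (fun s => K x y s) r) (Set.Ioi 0) r := by
          intro r hr
          obtain ⟨d, hd, _⟩ := key r hr
          rw [hd.deriv]
          exact hd.hasDerivWithinAt
        have hbound : ∀ r ∈ Set.Ioi (0:ℝ), ‖deriv (fun s => K x y s) r‖ ≤ B := by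
          intro r hr
          obtain ⟨d, hd, hdb⟩ := key r hr
          rw [Real.norm_eq_abs, hd.deriv]
          exact hdb
        have hmvt : ∀ δ : ℝ, δ ∈ Set.Ioo (0:ℝ) h → |K x y h - K x y δ| ≤ B * h := by
          intro δ hδ
          have h1 := Convex.norm_image_sub_le_of_norm_hasDerivWithin_le hwithin hbound
            (convex_Ioi 0) (Set.mem_Ioi.2 hδ.1) (Set.mem_Ioi.2 hh)
          rw [Real.norm_eq_abs, Real.norm_eq_abs] at h1
          calc |K x y h - K x y δ| ≤ B * |h - δ| := h1
            _ ≤ B * h := by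
              rw [abs_of_nonneg (by linarith [hδ.2] : (0:ℝ) ≤ h - δ)]
              exact mul_le_mul_of_nonneg_left (by linarith [hδ.1]) hB0
        have htend : Filter.Tendsto (fun δ => |K x y h - K x y δ|) (nhdsWithin 0 (Set.Ioi 0))
            (nhds |K x y h - K x y 0|) := (tendsto_const_nhds.sub hKcont).abs
        refine le_of_tendsto htend ?_
        filter_upwards [Ioo_mem_nhdsGT_of_mem ⟨le_refl (0:ℝ), hh⟩] with δ hδ
        exact hmvt δ hδ
      have hL := hdiff.hasDerivAt
      rw [hasDerivAt_iff_tendsto_slope] at hL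
      have hL2 : Filter.Tendsto (slope (fun s => K x y s) 0) (nhdsWithin 0 (Set.Ioi 0))
          (nhds (deriv (fun s => K x y s) 0)) :=
        hL.mono_left (nhdsWithin_mono _ (fun r hr => by simpa using ne_of_gt hr))
      have hfin : |deriv (fun s => K x y s) 0| ≤ B := by
        refine le_of_tendsto hL2.abs ?_
        filter_upwards [self_mem_nhdsWithin] with δ hδ
        have hδ0 : (0:ℝ) < δ := hδ
        rw [slope_def_field, sub_zero, abs_div, abs_of_pos hδ0, div_le_iff₀ hδ0]
        exact hslope δ hδ0
      exact hfin.trans hBle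
    · rw [deriv_zero_of_not_differentiableAt hdiff, abs_zero]
      have h3 : (0:ℝ) ≤ D ^ 2 / (2 * ε) := by positivity
      exact mul_nonneg (mul_nonneg h3 (by positivity)) (Real.exp_pos _).le
end

section
/- Under the Gevrey bound on λ, the partial x-derivative of the explicit kernel K satisfies |K_x(x,y,t)| ≤ (D/(2ε))·(1 + D/(2ε))·e^{D/(4ε)} for all 0 ≤ y ≤ x ≤ 1 and t ≥ 0. -/
lemma real_exp_tsum' (r : ℝ) : ∑' n : ℕ, r ^ n / (n.factorial : ℝ) = Real.exp r := by
  rw [Real.exp_eq_exp_ℝ, NormedSpace.exp_eq_tsum_div]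

lemma aux_summable' (r : ℝ) :
    Summable (fun n : ℕ => (n : ℝ) * r ^ (n - 1) / (n.factorial : ℝ)) := by
  rw [← summable_nat_add_iff 1]
  have h : (fun n : ℕ => ((n + 1 : ℕ) : ℝ) * r ^ (n + 1 - 1) / (((n + 1).factorial : ℝ)))
      = fun n : ℕ => r ^ n / (n.factorial : ℝ) := by
    funext n
    have h1 : ((n.factorial : ℝ)) ≠ 0 := by positivity
    rw [Nat.add_sub_cancel, Nat.factorial_succ]
    push_cast
    field_simp
  rw [h]
  exact Real.summable_pow_div_factorial r

lemma aux_tsum' (r : ℝ) :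
    ∑' n : ℕ, (n : ℝ) * r ^ (n - 1) / (n.factorial : ℝ) = Real.exp r := by
  rw [Summable.tsum_eq_zero_add (aux_summable' r)]
  have h : (fun n : ℕ => ((n + 1 : ℕ) : ℝ) * r ^ (n + 1 - 1) / (((n + 1).factorial : ℝ)))
      = fun n : ℕ => r ^ n / (n.factorial : ℝ) := by
    funext n
    have h1 : ((n.factorial : ℝ)) ≠ 0 := by positivity
    rw [Nat.add_sub_cancel, Nat.factorial_succ]
    push_cast
    field_simp
  simp only [h]
  simp [real_exp_tsum' r]

set_option maxHeartbeats 1000000 in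
/-- Bound on the `x`-derivative of the explicit kernel:
`|K_x(x,y,t)| ≤ (D/(2ε))(1 + D/(2ε)) e^{D/(4ε)}`. -/
theorem kernel_x_deriv_bound (lam F : ℝ → ℝ) (D ε : ℝ) (hD : 0 < D) (hε : 0 < ε)
    (K : ℝ → ℝ → ℝ → ℝ)
    (hsmooth : ContDiff ℝ (⊤ : ℕ∞) lam)
    (hG : ∀ n : ℕ, ∀ t : ℝ, 0 ≤ t →
      |iteratedDeriv n lam t| ≤ D ^ (n + 1) * n.factorial)
    (hF : ∀ t : ℝ, F t = lam t / ε * Real.exp (∫ ξ in (0:ℝ)..t, lam ξ))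
    (hFbound : ∀ n : ℕ, ∀ t : ℝ, 0 ≤ t →
      |iteratedDeriv n F t| ≤
        ((n + 1).factorial : ℝ) * D ^ (n + 1) / ε * Real.exp (∫ ξ in (0:ℝ)..t, lam ξ))
    (hK : ∀ x y t : ℝ, K x y t =
      -(x / 2) * Real.exp (-∫ ξ in (0:ℝ)..t, lam ξ) *
        ∑' n : ℕ, (1 / ((n.factorial : ℝ) * ((n + 1).factorial : ℝ))) *
          ((x ^ 2 - y ^ 2) / (4 * ε)) ^ n * iteratedDeriv n F t) :
    ∀ x y t : ℝ, 0 ≤ y → y ≤ x → x ≤ 1 → 0 ≤ t →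
      |deriv (fun z => K z y t) x| ≤
        D / (2 * ε) * (1 + D / (2 * ε)) * Real.exp (D / (4 * ε)) := by
  intro x y t hy hyx hx1 ht
  set I : ℝ := ∫ ξ in (0:ℝ)..t, lam ξ with hI
  set E : ℝ := Real.exp I with hE
  have hEpos : 0 < E := Real.exp_pos I
  set f : ℕ → ℝ → ℝ := fun n z =>
    (1 / ((n.factorial : ℝ) * ((n + 1).factorial : ℝ))) *
      ((z ^ 2 - y ^ 2) / (4 * ε)) ^ n * iteratedDeriv n F t with hfdef
  set f' : ℕ → ℝ → ℝ := fun n z =>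
    (1 / ((n.factorial : ℝ) * ((n + 1).factorial : ℝ))) *
      ((n : ℝ) * ((z ^ 2 - y ^ 2) / (4 * ε)) ^ (n - 1) * (2 * z / (4 * ε))) *
      iteratedDeriv n F t with hf'def
  -- derivatives of the terms
  have hderiv : ∀ (n : ℕ) (z : ℝ), HasDerivAt (f n) (f' n z) z := by
    intro n z
    have hg : HasDerivAt (fun w => (w ^ 2 - y ^ 2) / (4 * ε)) (2 * z / (4 * ε)) z := by
      have := ((hasDerivAt_pow 2 z).sub_const (y ^ 2)).div_const (4 * ε)
      exact this.congr_deriv (by norm_num)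
    exact ((hg.pow n).const_mul _).mul_const _
  -- general bound on |f' n z|
  have hder_bound : ∀ a b : ℝ, 0 ≤ a → 0 ≤ b → ∀ (n : ℕ) (z : ℝ),
      |(z ^ 2 - y ^ 2) / (4 * ε)| ≤ a → |2 * z / (4 * ε)| ≤ b →
      |f' n z| ≤ D ^ 2 * E * b / ε * ((n : ℝ) * (D * a) ^ (n - 1) / (n.factorial : ℝ)) := by
    intro a b ha hb n z hgz hbz
    match n with
    | 0 => simp [hf'def]
    | Nat.succ m =>
      have hc : (0 : ℝ) < 1 / (((m+1).factorial : ℝ) * ((m + 2).factorial : ℝ)) := by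
        positivity
      have h1 : |f' (m+1) z|
          = (1 / (((m+1).factorial : ℝ) * ((m + 2).factorial : ℝ))) *
            (((m+1 : ℕ) : ℝ) * |(z ^ 2 - y ^ 2) / (4 * ε)| ^ m * |2 * z / (4 * ε)|) *
            |iteratedDeriv (m+1) F t| := by
        simp only [hf'def, Nat.add_sub_cancel]
        rw [abs_mul, abs_mul, abs_mul, abs_mul, abs_pow, abs_of_nonneg hc.le, Nat.abs_cast]
      rw [h1]
      calc (1 / (((m+1).factorial : ℝ) * ((m + 2).factorial : ℝ))) *
            (((m+1 : ℕ) : ℝ) * |(z ^ 2 - y ^ 2) / (4 * ε)| ^ m * |2 * z / (4 * ε)|) *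
            |iteratedDeriv (m+1) F t|
          ≤ (1 / (((m+1).factorial : ℝ) * ((m + 2).factorial : ℝ))) *
            (((m+1 : ℕ) : ℝ) * a ^ m * b) *
            (((m + 2).factorial : ℝ) * D ^ (m + 2) / ε * E) := by
            gcongr <;> first
              | exact pow_le_pow_left₀ (abs_nonneg _) hgz m
              | exact hbz
              | exact hFbound (m+1) t ht
              | positivity
        _ = D ^ 2 * E * b / ε * (((m+1 : ℕ) : ℝ) * (D * a) ^ ((m+1) - 1) / (((m+1).factorial : ℝ))) := by
            have h2 : (((m+1).factorial : ℝ)) ≠ 0 := by positivity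
            have h3 : (((m+2).factorial : ℝ)) ≠ 0 := by positivity
            rw [Nat.add_sub_cancel, mul_pow]
            field_simp
            ring
  -- bound on |f n x|
  have hgx0 : 0 ≤ (x ^ 2 - y ^ 2) / (4 * ε) := by
    apply div_nonneg _ (by positivity)
    nlinarith
  have hgx1 : (x ^ 2 - y ^ 2) / (4 * ε) ≤ 1 / (4 * ε) := by
    gcongr
    nlinarith
  have hb1 : ∀ n : ℕ, |f n x| ≤ D * E / ε * ((D / (4 * ε)) ^ n / (n.factorial : ℝ)) := by
    intro n
    have h1 : |f n x| = (1 / ((n.factorial : ℝ) * ((n + 1).factorial : ℝ))) *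
        ((x ^ 2 - y ^ 2) / (4 * ε)) ^ n * |iteratedDeriv n F t| := by
      simp only [hfdef]
      rw [abs_mul, abs_mul, abs_pow, abs_of_nonneg hgx0,
        abs_of_nonneg (le_of_lt (by positivity))]
    rw [h1]
    calc (1 / ((n.factorial : ℝ) * ((n + 1).factorial : ℝ))) *
          ((x ^ 2 - y ^ 2) / (4 * ε)) ^ n * |iteratedDeriv n F t|
        ≤ (1 / ((n.factorial : ℝ) * ((n + 1).factorial : ℝ))) *
          (1 / (4 * ε)) ^ n * (((n + 1).factorial : ℝ) * D ^ (n + 1) / ε * E) := by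
          gcongr <;> first
            | exact hgx0
            | exact hgx1
            | exact hFbound n t ht
            | positivity
      _ = D * E / ε * ((D / (4 * ε)) ^ n / (n.factorial : ℝ)) := by
          have h2 : ((n.factorial : ℝ)) ≠ 0 := by positivity
          have h3 : (((n+1).factorial : ℝ)) ≠ 0 := by positivity
          rw [div_pow, div_pow]
          field_simp
          ring
  have hsum_b1 : Summable (fun n : ℕ => D * E / ε * ((D / (4 * ε)) ^ n / (n.factorial : ℝ))) :=
    (Real.summable_pow_div_factorial _).mul_left _
  have hsum_abs_f : Summable (fun n : ℕ => |f n x|) :=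
    Summable.of_nonneg_of_le (fun n => abs_nonneg _) hb1 hsum_b1
  have hsum_f : Summable (fun n : ℕ => f n x) := hsum_abs_f.of_abs
  -- the crude bound on the open interval, for differentiating the series
  have hcrude : ∀ (n : ℕ) (z : ℝ), z ∈ Set.Ioo (-2 : ℝ) 2 →
      |f' n z| ≤ D ^ 2 * E * (1/ε) / ε *
        ((n : ℝ) * (D * (2/ε)) ^ (n - 1) / (n.factorial : ℝ)) := by
    intro n z hz
    apply hder_bound _ _ (by positivity) (by positivity)
    · rw [abs_div, abs_of_nonneg (by positivity : (0:ℝ) ≤ 4 * ε)]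
      rw [div_le_div_iff₀ (by positivity) (by positivity)]
      have h1 : |z ^ 2 - y ^ 2| ≤ 5 := by
        rw [abs_le]
        constructor <;> nlinarith [hz.1, hz.2, abs_nonneg z, sq_nonneg z, sq_nonneg y]
      nlinarith
    · rw [abs_div, abs_of_nonneg (by positivity : (0:ℝ) ≤ 4 * ε)]
      rw [div_le_div_iff₀ (by positivity) (by positivity)]
      have h1 : |2 * z| ≤ 4 := by
        rw [abs_mul]
        have : |z| ≤ 2 := by
          rw [abs_le]; exact ⟨le_of_lt hz.1, le_of_lt hz.2⟩
        norm_num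
        linarith
      nlinarith
  have hsum_u : Summable (fun n : ℕ => D ^ 2 * E * (1/ε) / ε *
      ((n : ℝ) * (D * (2/ε)) ^ (n - 1) / (n.factorial : ℝ))) :=
    (aux_summable' _).mul_left _
  have hxmem : x ∈ Set.Ioo (-2 : ℝ) 2 := ⟨by linarith, by linarith⟩
  -- derivative of the series
  have hS : HasDerivAt (fun z => ∑' n : ℕ, f n z) (∑' n : ℕ, f' n x) x :=
    hasDerivAt_tsum_of_isPreconnected hsum_u isOpen_Ioo (convex_Ioo _ _).isPreconnected
      (fun n z _ => hderiv n z) hcrude hxmem hsum_f hxmem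
  -- derivative of K
  have hlin : HasDerivAt (fun z : ℝ => -(z / 2) * Real.exp (-I)) (-(1/2) * Real.exp (-I)) x :=
    (((hasDerivAt_id x).div_const 2).neg).mul_const _
  have hprod := hlin.mul hS
  have hKfun : (fun z => K z y t) = fun z => -(z / 2) * Real.exp (-I) * ∑' n : ℕ, f n z := by
    funext z
    exact hK z y t
  have hDeq : deriv (fun z => K z y t) x =
      -(1/2) * Real.exp (-I) * (∑' n : ℕ, f n x) +
        (-(x / 2) * Real.exp (-I)) * (∑' n : ℕ, f' n x) := by
    rw [hKfun]
    exact hprod.deriv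
  -- bounds on the two sums
  have hSx : |∑' n : ℕ, f n x| ≤ D * E / ε * Real.exp (D / (4 * ε)) := by
    calc |∑' n : ℕ, f n x| ≤ ∑' n : ℕ, |f n x| := by
          have := norm_tsum_le_tsum_norm (f := fun n : ℕ => f n x)
            (by simpa [Real.norm_eq_abs] using hsum_abs_f)
          simpa [Real.norm_eq_abs] using this
      _ ≤ ∑' n : ℕ, D * E / ε * ((D / (4 * ε)) ^ n / (n.factorial : ℝ)) :=
          Summable.tsum_le_tsum hb1 hsum_abs_f hsum_b1
      _ = D * E / ε * Real.exp (D / (4 * ε)) := by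
          rw [tsum_mul_left, real_exp_tsum']
  have hb2 : ∀ n : ℕ, |f' n x| ≤ D ^ 2 * E * (1/(2*ε)) / ε *
      ((n : ℝ) * (D / (4 * ε)) ^ (n - 1) / (n.factorial : ℝ)) := by
    intro n
    have h := hder_bound (1/(4*ε)) (1/(2*ε)) (by positivity) (by positivity) n x
      (by rw [abs_of_nonneg hgx0]; exact hgx1)
      (by
        have h0 : 0 ≤ 2 * x / (4 * ε) := div_nonneg (by linarith) (by positivity)
        rw [abs_of_nonneg h0]
        rw [div_le_div_iff₀ (by positivity) (by positivity)]
        nlinarith)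
    have he : D * (1/(4*ε)) = D / (4*ε) := by ring
    rwa [he] at h
  have hsum_b2 : Summable (fun n : ℕ => D ^ 2 * E * (1/(2*ε)) / ε *
      ((n : ℝ) * (D / (4 * ε)) ^ (n - 1) / (n.factorial : ℝ))) :=
    (aux_summable' _).mul_left _
  have hsum_abs_f' : Summable (fun n : ℕ => |f' n x|) :=
    Summable.of_nonneg_of_le (fun n => abs_nonneg _) hb2 hsum_b2
  have hS'x : |∑' n : ℕ, f' n x| ≤ D ^ 2 * E / (2 * ε ^ 2) * Real.exp (D / (4 * ε)) := by
    calc |∑' n : ℕ, f' n x| ≤ ∑' n : ℕ, |f' n x| := by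
          have := norm_tsum_le_tsum_norm (f := fun n : ℕ => f' n x)
            (by simpa [Real.norm_eq_abs] using hsum_abs_f')
          simpa [Real.norm_eq_abs] using this
      _ ≤ ∑' n : ℕ, D ^ 2 * E * (1/(2*ε)) / ε *
            ((n : ℝ) * (D / (4 * ε)) ^ (n - 1) / (n.factorial : ℝ)) :=
          Summable.tsum_le_tsum hb2 hsum_abs_f' hsum_b2
      _ = D ^ 2 * E / (2 * ε ^ 2) * Real.exp (D / (4 * ε)) := by
          rw [tsum_mul_left, aux_tsum']
          field_simp
  -- final estimate
  have hexpI : Real.exp (-I) = E⁻¹ := by rw [Real.exp_neg]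
  rw [hDeq]
  have habs : |(-(1/2) * Real.exp (-I)) * (∑' n : ℕ, f n x) +
      (-(x / 2) * Real.exp (-I)) * (∑' n : ℕ, f' n x)|
      ≤ (1/2) * Real.exp (-I) * |∑' n : ℕ, f n x| +
        (1/2) * Real.exp (-I) * |∑' n : ℕ, f' n x| := by
    calc |(-(1/2) * Real.exp (-I)) * (∑' n : ℕ, f n x) +
        (-(x / 2) * Real.exp (-I)) * (∑' n : ℕ, f' n x)|
        ≤ |(-(1/2) * Real.exp (-I)) * (∑' n : ℕ, f n x)| +
          |(-(x / 2) * Real.exp (-I)) * (∑' n : ℕ, f' n x)| := abs_add_le _ _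
      _ = (1/2) * Real.exp (-I) * |∑' n : ℕ, f n x| +
          (x/2) * Real.exp (-I) * |∑' n : ℕ, f' n x| := by
          rw [abs_mul, abs_mul, abs_mul, abs_mul, abs_neg, abs_neg,
            abs_of_nonneg (Real.exp_pos (-I)).le,
            abs_of_nonneg (by norm_num : (0:ℝ) ≤ (1:ℝ)/2),
            abs_of_nonneg (by linarith : (0:ℝ) ≤ x/2)]
      _ ≤ (1/2) * Real.exp (-I) * |∑' n : ℕ, f n x| +
          (1/2) * Real.exp (-I) * |∑' n : ℕ, f' n x| := by
          gcongr
  refine habs.trans ?_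
  have hstep : (1/2) * Real.exp (-I) * |∑' n : ℕ, f n x| +
      (1/2) * Real.exp (-I) * |∑' n : ℕ, f' n x|
      ≤ (1/2) * Real.exp (-I) * (D * E / ε * Real.exp (D / (4 * ε))) +
        (1/2) * Real.exp (-I) * (D ^ 2 * E / (2 * ε ^ 2) * Real.exp (D / (4 * ε))) := by
    gcongr <;> positivity
  refine hstep.trans (le_of_eq ?_)
  rw [hexpI]
  have hEne : E ≠ 0 := ne_of_gt hEpos
  field_simp
end

section
/- Let m: [a,b) → ℝ be C¹ on (a,b) and continuous at a, satisfying m'(t) ≥ −η·m(t) − ρ·γ·m(t) on any interval where d²(t) ≤ γ·m(t), where d is continuous with d(a) = 0 and the stopping rule guarantees d²(t) ≤ γm(t) up to the first crossing. If m(a) > 0, then m(t) > 0 and d²(t) ≤ γ·m(t) for all t ∈ [a, b), where b is the first time d²(t) > γm(t) would occur. -/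
/-!
On the whole interval the trigger condition `d² ≤ γ m` holds, so the dissipation `ρ d²` is at most
`ρ γ m` and, since the input `g` is nonnegative, `m' ≥ -(η + ρ γ) m`. Hence `m(t) e^{(η + ρ γ) t}`
is nondecreasing, which gives `m(t) ≥ m(a) e^{-(η + ρ γ)(t - a)} > 0`.
-/

open Real Set

section LinearLowerBound

variable {D : Set ℝ} {f f' : ℝ → ℝ} {c : ℝ}

theorem monotoneOn_mul_exp_of_le_deriv (hD : Convex ℝ D) (hf : ContinuousOn f D)
    (hf' : ∀ t ∈ interior D, HasDerivAt f (f' t) t)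
    (hbound : ∀ t ∈ interior D, -c * f t ≤ f' t) :
    MonotoneOn (fun t => f t * exp (c * t)) D := by
  have hexp (t : ℝ) : HasDerivAt (fun s => exp (c * s)) (exp (c * t) * c) t := by
    simpa using ((hasDerivAt_id t).const_mul c).exp
  refine monotoneOn_of_hasDerivWithinAt_nonneg hD
    (hf.mul (continuous_exp.comp (continuous_const_mul c)).continuousOn)
    (fun t ht => ((hf' t ht).mul (hexp t)).hasDerivWithinAt) fun t ht => ?_
  have hsum : 0 ≤ f' t + c * f t := by linarith [hbound t ht]
  calc (0 : ℝ) ≤ (f' t + c * f t) * exp (c * t) := mul_nonneg hsum (exp_pos _).le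
    _ = f' t * exp (c * t) + f t * (exp (c * t) * c) := by ring

theorem mul_exp_le_of_le_deriv (hD : Convex ℝ D) (hf : ContinuousOn f D)
    (hf' : ∀ t ∈ interior D, HasDerivAt f (f' t) t)
    (hbound : ∀ t ∈ interior D, -c * f t ≤ f' t)
    {x y : ℝ} (hx : x ∈ D) (hy : y ∈ D) (hxy : x ≤ y) :
    f x * exp (-c * (y - x)) ≤ f y := by
  have hmono := monotoneOn_mul_exp_of_le_deriv hD hf hf' hbound hx hy hxy
  calc f x * exp (-c * (y - x)) = f x * exp (c * x) * exp (-(c * y)) := by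
        rw [mul_assoc, ← exp_add]; ring_nf
    _ ≤ f y * exp (c * y) * exp (-(c * y)) := by gcongr
    _ = f y := by rw [mul_assoc, ← exp_add, add_neg_cancel, exp_zero, mul_one]

end LinearLowerBound

theorem event_trigger_positivity_general (η γ ρ : ℝ) (hρ : 0 < ρ)
    (a b : ℝ) (d m g : ℝ → ℝ)
    (hm_cont : ContinuousOn m (Set.Ico a b))
    (hm_ode : ∀ t ∈ Set.Ioo a b,
      HasDerivAt m (-η * m t - ρ * d t ^ 2 + g t) t)
    (hg : ∀ t ∈ Set.Ioo a b, 0 ≤ g t)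
    (hma : 0 < m a)
    -- `b` is no later than the first time the triggering condition `d² > γ m` occurs:
    (hfirst : ∀ t : ℝ, a ≤ t → t < b → d t ^ 2 ≤ γ * m t) :
    ∀ t : ℝ, a ≤ t → t < b → 0 < m t ∧ d t ^ 2 ≤ γ * m t := by
  intro t hat htb
  refine ⟨?_, hfirst t hat htb⟩
  have hbound : ∀ s ∈ interior (Ico a b),
      -(η + ρ * γ) * m s ≤ -η * m s - ρ * d s ^ 2 + g s := by
    rw [interior_Ico]
    intro s hs
    have hdissipation : ρ * d s ^ 2 ≤ ρ * (γ * m s) :=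
      mul_le_mul_of_nonneg_left (hfirst s hs.1.le hs.2) hρ.le
    linarith [hg s hs]
  have hlower := mul_exp_le_of_le_deriv (convex_Ico a b) hm_cont
    (by rwa [interior_Ico]) hbound ⟨le_rfl, hat.trans_lt htb⟩ ⟨hat, htb⟩ hat
  exact (mul_pos hma (exp_pos _)).trans_le hlower

/-- Between consecutive events, `m` stays positive and `d² ≤ γ m`. -/
theorem event_trigger_positivity (η γ ρ : ℝ) (hη : 0 < η) (hγ : 0 < γ) (hρ : 0 < ρ)
    (a b : ℝ) (hab : a < b) (d m g : ℝ → ℝ)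
    (hd_cont : ContinuousOn d (Set.Ico a b)) (hda : d a = 0)
    (hm_cont : ContinuousOn m (Set.Ico a b))
    (hm_ode : ∀ t ∈ Set.Ioo a b,
      HasDerivAt m (-η * m t - ρ * d t ^ 2 + g t) t)
    (hg : ∀ t ∈ Set.Ioo a b, 0 ≤ g t)
    (hma : 0 < m a)
    -- `b` is no later than the first time the triggering condition `d² > γ m` occurs:
    (hfirst : ∀ t : ℝ, a ≤ t → t < b → d t ^ 2 ≤ γ * m t) :
    ∀ t : ℝ, a ≤ t → t < b → 0 < m t ∧ d t ^ 2 ≤ γ * m t :=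
  event_trigger_positivity_general η γ ρ hρ a b d m g hm_cont hm_ode hg hma hfirst
end

section
/- Let d: [t_j, t_{j+1}) → ℝ be C¹ with d(t_j) = 0, and suppose (d²)'(t) ≤ ρ₁ d²(t) + α₁ a(t) + α₂ b(t) where a(t) = ‖u(·,t)‖², b(t) = u(1,t)², and ρ₁, α₁, α₂ > 0. Let m satisfy m' = −ηm − ρd² + β₁a + β₂b with m(t_j) > 0, β₁ = α₁/(γ(1−σ)), β₂ = α₂/(γ(1−σ)), σ ∈ (0,1). If the next event time is t_{j+1} = inf{t > t_j : d²(t) > γ m(t)}, then t_{j+1} − t_j ≥ τ for a constant τ > 0 depending only on (ρ₁, γ, η, ρ, σ) and not on the initial data. -/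
/-!
Let `ψ = d² / (γ m)`; it vanishes at `t_j` and reaches `1` when the trigger fires. Let `t₀` be
the last time at which `ψ ≤ 1 - σ`. After `t₀` we have `(1 - σ) γ m ≤ d² ≤ γ m`, so in the quotient
rule the terms `β₁ a + β₂ b` of `m'` absorb the terms `α₁ a + α₂ b` of `(d²)'`, leaving
`ψ' ≤ (ρ₁ + η) ψ + ρ γ ψ² ≤ ρ₁ + η + ρ γ`. Hence `ψ` needs time at least `σ / (ρ₁ + η + ρ γ)` to
climb from `1 - σ` to `1`. The quotient makes sense because `m' ≥ -(η + ρ γ) m` before the event,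
so `m` stays positive.
-/

open Set Real

theorem pos_of_hasDerivAt_ge_neg_mul {f f' : ℝ → ℝ} {K a b : ℝ} (hf : ContinuousOn f (Icc a b))
    (hf' : ∀ t ∈ Ioo a b, HasDerivAt f (f' t) t) (hbound : ∀ t ∈ Ioo a b, -K * f t ≤ f' t)
    (ha : 0 < f a) : ∀ t ∈ Icc a b, 0 < f t := by
  have hderiv : ∀ t ∈ Ioo a b,
      HasDerivAt (fun s => f s * exp (K * s)) ((f' t + K * f t) * exp (K * t)) t := fun t ht => by
    have hexp : HasDerivAt (fun s => exp (K * s)) (exp (K * t) * K) t := by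
      simpa using ((hasDerivAt_id t).const_mul K).exp
    exact ((hf' t ht).mul hexp).congr_deriv (by ring)
  have hmono : MonotoneOn (fun t => f t * exp (K * t)) (Icc a b) := by
    refine monotoneOn_of_deriv_nonneg (convex_Icc a b) (hf.mul (by fun_prop)) ?_ ?_ <;>
      rw [interior_Icc]
    · exact fun t ht => (hderiv t ht).differentiableAt.differentiableWithinAt
    · intro t ht
      rw [(hderiv t ht).deriv]
      exact mul_nonneg (by linarith [hbound t ht]) (exp_pos _).le
  intro t ht
  have h := hmono (left_mem_Icc.2 (ht.1.trans ht.2)) ht ht.1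
  exact pos_of_mul_pos_left ((mul_pos ha (exp_pos (K * a))).trans_le h) (exp_pos _).le

theorem ContinuousOn.exists_last_nonpos {H : ℝ → ℝ} {a b : ℝ} (hab : a ≤ b)
    (hH : ContinuousOn H (Icc a b)) (ha : H a ≤ 0) (hb : 0 < H b) :
    ∃ c ∈ Ico a b, H c ≤ 0 ∧ ∀ t ∈ Ioc c b, 0 < H t := by
  have hS : IsCompact (Icc a b ∩ H ⁻¹' Iic 0) :=
    isCompact_Icc.of_isClosed_subset (hH.preimage_isClosed_of_isClosed isClosed_Icc isClosed_Iic)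
      inter_subset_left
  obtain ⟨c, ⟨hc, hHc⟩, hmax⟩ := hS.exists_isGreatest ⟨a, left_mem_Icc.2 hab, ha⟩
  refine ⟨c, ⟨hc.1, hc.2.lt_of_ne ?_⟩, hHc, fun t ht => ?_⟩
  · rintro rfl
    exact (not_le.2 hb) hHc
  · by_contra! hHt
    exact (not_le.2 ht.1) (hmax ⟨⟨hc.1.trans ht.1.le, ht.2⟩, hHt⟩)

theorem sub_le_mul_sub_of_forall_hasDerivAt_le {f : ℝ → ℝ} {C a b : ℝ} (hab : a ≤ b)
    (hf : ContinuousOn f (Icc a b)) (hf' : ∀ t ∈ Ioo a b, ∃ f', HasDerivAt f f' t ∧ f' ≤ C) :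
    f b - f a ≤ C * (b - a) := by
  refine (convex_Icc a b).image_sub_le_mul_sub_of_deriv_le hf ?_ ?_ a (left_mem_Icc.2 hab) b
    (right_mem_Icc.2 hab) hab <;> rw [interior_Icc] <;> intro t ht <;>
    obtain ⟨f', hderiv, hle⟩ := hf' t ht
  · exact hderiv.differentiableAt.differentiableWithinAt
  · exact hderiv.deriv ▸ hle

theorem mul_le_div_mul_of_mul_le {α κ m x : ℝ} (hα : 0 ≤ α) (hκ : 0 < κ) (h : κ * m ≤ x) :
    α * m ≤ α / κ * x :=
  calc α * m = α / κ * (κ * m) := by field_simp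
    _ ≤ α / κ * x := mul_le_mul_of_nonneg_left h (div_nonneg hα hκ.le)

theorem exists_hasDerivAt_div_le {x m : ℝ → ℝ} {t D a b ρ₁ α₁ α₂ β₁ β₂ γ η ρ : ℝ}
    (hx' : HasDerivAt x D t) (hm' : HasDerivAt m (-η * m t - ρ * x t + β₁ * a + β₂ * b) t)
    (hγ : 0 < γ) (hm : 0 < m t) (hx₀ : 0 ≤ x t) (hx : x t ≤ γ * m t) (ha : 0 ≤ a) (hb : 0 ≤ b)
    (hρ₁η : 0 ≤ ρ₁ + η) (hρ : 0 ≤ ρ) (h₁ : α₁ * m t ≤ β₁ * x t) (h₂ : α₂ * m t ≤ β₂ * x t)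
    (hD : D ≤ ρ₁ * x t + α₁ * a + α₂ * b) :
    ∃ ψ', HasDerivAt (fun s => x s / (γ * m s)) ψ' t ∧ ψ' ≤ ρ₁ + η + ρ * γ := by
  have hγm : 0 < γ * m t := mul_pos hγ hm
  refine ⟨_, hx'.div (hm'.const_mul γ) hγm.ne', ?_⟩
  rw [div_le_iff₀ (by positivity)]
  nlinarith [mul_le_mul_of_nonneg_right hD hγm.le,
    mul_le_mul_of_nonneg_left h₁ (mul_nonneg hγ.le ha),
    mul_le_mul_of_nonneg_left h₂ (mul_nonneg hγ.le hb),
    mul_le_mul_of_nonneg_left hx (mul_nonneg (mul_nonneg hρ₁η hγ.le) hm.le),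
    mul_le_mul hx hx hx₀ hγm.le, mul_nonneg hρ hγ.le]

/-- Uniform minimal dwell-time for the dynamic event trigger: there is `τ > 0`,
depending only on the parameters, such that every inter-event interval has
length at least `τ`. -/
theorem minimal_dwell_time (ρ₁ α₁ α₂ γ η ρ σ : ℝ)
    (hρ₁ : 0 < ρ₁) (hα₁ : 0 < α₁) (hα₂ : 0 < α₂)
    (hγ : 0 < γ) (hη : 0 < η) (hρ : 0 < ρ) (hσ : 0 < σ) (hσ1 : σ < 1) :
    ∃ τ : ℝ, 0 < τ ∧
      ∀ (tj tnext : ℝ) (d m a b : ℝ → ℝ),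
        tj < tnext →
        ContinuousOn d (Set.Icc tj tnext) → d tj = 0 →
        ContinuousOn m (Set.Icc tj tnext) → 0 < m tj →
        (∀ t ∈ Set.Ioo tj tnext, 0 ≤ a t) →
        (∀ t ∈ Set.Ioo tj tnext, 0 ≤ b t) →
        (∀ t ∈ Set.Ioo tj tnext,
          HasDerivAt (fun s => d s ^ 2) (deriv (fun s => d s ^ 2) t) t ∧
          deriv (fun s => d s ^ 2) t ≤ ρ₁ * d t ^ 2 + α₁ * a t + α₂ * b t) →
        (∀ t ∈ Set.Ioo tj tnext,
          HasDerivAt m (-η * m t - ρ * d t ^ 2 +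
            (α₁ / (γ * (1 - σ))) * a t + (α₂ / (γ * (1 - σ))) * b t) t) →
        -- `tnext` is the first time the trigger fires:
        (∀ t : ℝ, tj ≤ t → t < tnext → d t ^ 2 ≤ γ * m t) →
        γ * m tnext ≤ d tnext ^ 2 →
        τ ≤ tnext - tj := by
  have hκ : 0 < γ * (1 - σ) := mul_pos hγ (sub_pos.2 hσ1)
  have hL : 0 < ρ₁ + η + ρ * γ := by positivity
  refine ⟨σ / (ρ₁ + η + ρ * γ), div_pos hσ hL, ?_⟩
  intro tj tnext d m a b hlt hdc hd0 hmc hm0 ha hb hd' hm' htrig hfire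
  have hm_pos : ∀ t ∈ Icc tj tnext, 0 < m t := by
    refine pos_of_hasDerivAt_ge_neg_mul (K := η + ρ * γ) hmc hm' (fun t ht => ?_) hm0
    nlinarith [htrig t ht.1.le ht.2, mul_nonneg (div_nonneg hα₁.le hκ.le) (ha t ht),
      mul_nonneg (div_nonneg hα₂.le hκ.le) (hb t ht)]
  obtain ⟨t₀, ⟨htj₀, ht₀⟩, hH₀, hH⟩ :=
    ContinuousOn.exists_last_nonpos (H := fun t => d t ^ 2 - γ * (1 - σ) * m t) hlt.le
      ((hdc.pow 2).sub (continuousOn_const.mul hmc)) (by simpa [hd0] using (mul_pos hκ hm0).le)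
      (by nlinarith [mul_pos (mul_pos hγ hσ) (hm_pos tnext (right_mem_Icc.2 hlt.le))])
  have hsub : Icc t₀ tnext ⊆ Icc tj tnext := Icc_subset_Icc_left htj₀
  have hslope := sub_le_mul_sub_of_forall_hasDerivAt_le (f := fun t => d t ^ 2 / (γ * m t)) ht₀.le
    (((hdc.mono hsub).pow 2).div (continuousOn_const.mul (hmc.mono hsub))
      fun t ht => (mul_pos hγ (hm_pos t (hsub ht))).ne')
    fun t ht => by
      have htj : t ∈ Ioo tj tnext := ⟨htj₀.trans_lt ht.1, ht.2⟩
      have hlow : γ * (1 - σ) * m t ≤ d t ^ 2 := by linarith [hH t ⟨ht.1, ht.2.le⟩]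
      exact exists_hasDerivAt_div_le (hd' t htj).1 (hm' t htj) hγ
        (hm_pos t (Ioo_subset_Icc_self htj)) (sq_nonneg _) (htrig t htj.1.le htj.2) (ha t htj) (hb t htj) (by positivity) hρ.le
        (mul_le_div_mul_of_mul_le hα₁.le hκ hlow) (mul_le_div_mul_of_mul_le hα₂.le hκ hlow)
        (hd' t htj).2
  have hψ₀ : d t₀ ^ 2 / (γ * m t₀) ≤ 1 - σ := by
    rw [div_le_iff₀ (mul_pos hγ (hm_pos t₀ (hsub (left_mem_Icc.2 ht₀.le))))]
    linarith
  have hψ₁ : 1 ≤ d tnext ^ 2 / (γ * m tnext) := by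
    rwa [le_div_iff₀ (mul_pos hγ (hm_pos tnext (right_mem_Icc.2 hlt.le))), one_mul]
  rw [div_le_iff₀' hL]
  nlinarith
end
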